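/- arXiv:1504.04527 — 12 statements merged into one kernel-verified Lean document; each statement's English description precedes it below -/
import Mathlib

section
/- Suppose the column space of B is contained in that of A and the column space of Cᵀ is contained in that of Aᵀ. Let H be the block matrix [[A†, -A†B],[CA†, D - CA†B]]. Then M[x¹;x²] = [AA†y¹; y²] if and only if H[y¹;x²] = [A†Ax¹; y²]. -/
open Matrix LinearMap

/-- `X` is the Moore-Penrose inverse of `A`. -/
def IsMoorePenrose {α β : Type*} [Fintype α] [Fintype β] [DecidableEq α] [DecidableEq β]
    (A : Matrix α β ℝ) (X : Matrix β α ℝ) : Prop :=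
  A * X * A = A ∧ X * A * X = X ∧ (A * X)ᵀ = A * X ∧ (X * A)ᵀ = X * A

/-!
The range conditions amount to `A A† B = B` and `C A† A = C`. Multiplying the first block row of
`M` by `A†` (using `A† A A† = A†`), and that of `H` by `A` (using `A A† A = A`), shows that the two
first block rows express the same condition; under it `C x¹ = C A† A x¹ = C A† y¹ - C A† B x²`,
so the two second block rows have equal left-hand sides.
-/

namespace Matrix

variable {R : Type*} [CommRing R] {k l m n : Type*} [Fintype l] [Fintype m] [Fintype n]
  {A : Matrix m n R} {X : Matrix n m R}

theorem mul_mul_eq_of_range_mulVecLin_le [DecidableEq l] (hAXA : A * X * A = A)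
    {B : Matrix m l R} (hB : range B.mulVecLin ≤ range A.mulVecLin) : A * X * B = B := by
  refine ext_iff_mulVec.mpr fun v => ?_
  obtain ⟨w, hw⟩ := hB ⟨v, rfl⟩
  simp only [mulVecLin_apply] at hw
  rw [← mulVec_mulVec, ← hw, mulVec_mulVec, hAXA]

theorem mul_mul_eq_of_range_mulVecLin_transpose_le [Fintype k] [DecidableEq k]
    (hAXA : A * X * A = A) {C : Matrix k n R} (hC : range Cᵀ.mulVecLin ≤ range Aᵀ.mulVecLin) :
    C * X * A = C := by
  have hAXA_transpose : Aᵀ * Xᵀ * Aᵀ = Aᵀ := by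
    rw [← transpose_mul, ← transpose_mul, ← Matrix.mul_assoc, hAXA]
  simpa [Matrix.mul_assoc] using
    congrArg transpose (mul_mul_eq_of_range_mulVecLin_le hAXA_transpose hC)

variable {B : Matrix m l R}

theorem mulVec_add_mulVec_eq_iff (hAXA : A * X * A = A) (hXAX : X * A * X = X)
    (hAXB : A * X * B = B) (x₁ : n → R) (x₂ : l → R) (y₁ : m → R) :
    A *ᵥ x₁ + B *ᵥ x₂ = (A * X) *ᵥ y₁ ↔ X *ᵥ y₁ + (-(X * B)) *ᵥ x₂ = (X * A) *ᵥ x₁ := by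
  constructor
  · intro h
    have hX := congrArg (X *ᵥ ·) h
    simp only [mulVec_add, mulVec_mulVec, ← Matrix.mul_assoc, hXAX] at hX
    rw [← hX, neg_mulVec]
    abel
  · intro h
    have hA := congrArg (A *ᵥ ·) h
    simp only [mulVec_add, mulVec_neg, neg_mulVec, mulVec_mulVec, ← Matrix.mul_assoc, hAXA,
      hAXB] at hA
    rw [← hA]
    abel

theorem mul_mulVec_add_sub_mulVec_eq {C : Matrix k n R} (hCXA : C * X * A = C) (D : Matrix k l R)
    {x₁ : n → R} {x₂ : l → R} {y₁ : m → R} (h : X *ᵥ y₁ + (-(X * B)) *ᵥ x₂ = (X * A) *ᵥ x₁) :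
    (C * X) *ᵥ y₁ + (D - C * X * B) *ᵥ x₂ = C *ᵥ x₁ + D *ᵥ x₂ := by
  have hC := congrArg (C *ᵥ ·) h
  simp only [mulVec_add, mulVec_mulVec, neg_mulVec, mulVec_neg, ← Matrix.mul_assoc, hCXA] at hC
  rw [← hC, sub_mulVec]
  abel

end Matrix

theorem stmt0
    {m n s p : ℕ}
    (A : Matrix (Fin m) (Fin n) ℝ) (B : Matrix (Fin m) (Fin p) ℝ)
    (C : Matrix (Fin s) (Fin n) ℝ) (D : Matrix (Fin s) (Fin p) ℝ)
    (Ad : Matrix (Fin n) (Fin m) ℝ) (hA : IsMoorePenrose A Ad)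
    (hB : LinearMap.range (Matrix.mulVecLin (B)) ≤ LinearMap.range (Matrix.mulVecLin (A)))
    (hC : LinearMap.range (Matrix.mulVecLin (Cᵀ)) ≤ LinearMap.range (Matrix.mulVecLin (Aᵀ)))
    (x1 : Fin n → ℝ) (x2 : Fin p → ℝ) (y1 : Fin m → ℝ) (y2 : Fin s → ℝ) :
    (Matrix.fromBlocks A B C D).mulVec (Sum.elim x1 x2)
        = Sum.elim ((A * Ad).mulVec y1) y2 ↔
    (Matrix.fromBlocks Ad (-(Ad * B)) (C * Ad) (D - C * Ad * B)).mulVec (Sum.elim y1 x2)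
        = Sum.elim ((Ad * A).mulVec x1) y2 := by
  obtain ⟨hAXA, hXAX, -, -⟩ := hA
  have hAXB := mul_mul_eq_of_range_mulVecLin_le hAXA hB
  have hCXA := mul_mul_eq_of_range_mulVecLin_transpose_le hAXA hC
  simp only [fromBlocks_mulVec, Sum.elim_comp_inl, Sum.elim_comp_inr, Sum.elim_eq_iff]
  rw [mulVec_add_mulVec_eq_iff hAXA hXAX hAXB]
  exact and_congr_right fun h => by rw [mul_mulVec_add_sub_mulVec_eq hCXA D h]
end

section
/- If R(B) ⊆ R(A), R(Cᵀ) ⊆ R(Aᵀ), R(C) ⊆ R(D), and R(Bᵀ) ⊆ R(Dᵀ), then J is the Moore-Penrose inverse of H, i.e., H† = J, where H = [[A†, -A†B],[CA†, D - CA†B]] and J = [[A - BD†C, BD†],[-D†C, D†]]. -/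
open Matrix LinearMap

/-!
The range inclusions say exactly that `A A† B = B`, `C A† A = C`, `D D† C = C` and
`B D† D = B`. Under these, `H J = diag(A† A, D D†)` and `J H = diag(A A†, D† D)`, both
symmetric as `A†` and `D†` are Moore-Penrose inverses, and multiplying these block-diagonal
products back onto `H` and `J` reduces the remaining Penrose equations to those of `A` and `D`.
-/

namespace Matrix

variable {R m n p s : Type*}

theorem exists_mul_eq_of_range_mulVecLin_le [CommSemiring R] [Fintype n] [Fintype p]
    [DecidableEq p] {A : Matrix m n R} {B : Matrix m p R}
    (h : LinearMap.range B.mulVecLin ≤ LinearMap.range A.mulVecLin) :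
    ∃ X : Matrix n p R, A * X = B := by
  choose x hx using fun j => h (LinearMap.mem_range_self _ (Pi.single j 1))
  refine ⟨(of x)ᵀ, ext fun i j => ?_⟩
  have hcol := congrFun (hx j) i
  rw [mulVecLin_apply, mulVecLin_apply, mulVec_single_one, col_apply] at hcol
  simpa [mul_apply, mulVec, dotProduct] using hcol

section InnerInverse

variable [CommSemiring R] [Fintype m] [Fintype n] [Fintype p] [DecidableEq p]
  {A : Matrix m n R} {G : Matrix n m R}

theorem mul_mul_eq_of_range_mulVecLin_le_s2 (hA : A * G * A = A) {B : Matrix m p R}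
    (h : LinearMap.range B.mulVecLin ≤ LinearMap.range A.mulVecLin) : A * G * B = B := by
  obtain ⟨X, rfl⟩ := exists_mul_eq_of_range_mulVecLin_le h
  rw [← Matrix.mul_assoc, hA]

theorem mul_mul_eq_of_range_mulVecLin_transpose_le_s2 (hA : A * G * A = A) {C : Matrix p n R}
    (h : LinearMap.range Cᵀ.mulVecLin ≤ LinearMap.range Aᵀ.mulVecLin) : C * G * A = C := by
  obtain ⟨Y, hY⟩ := exists_mul_eq_of_range_mulVecLin_le h
  rw [← transpose_transpose C, ← hY, transpose_mul, transpose_transpose, Matrix.mul_assoc,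
    Matrix.mul_assoc, ← Matrix.mul_assoc A, hA]

end InnerInverse

section PivotTransform

variable [Ring R] [Fintype m] [Fintype n] [Fintype p] [Fintype s]

/-- The pseudo principal pivot transform of `fromBlocks A B C D` relative to `A`,
with `Ad` in the role of `A†`. -/
def pseudoPrincipalPivot (Ad : Matrix n m R) (B : Matrix m p R) (C : Matrix s n R)
    (D : Matrix s p R) : Matrix (n ⊕ s) (m ⊕ p) R :=
  fromBlocks Ad (-(Ad * B)) (C * Ad) (D - C * Ad * B)

/-- The complementary pseudo principal pivot transform of `fromBlocks A B C D` relative to `D`,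
with `Dd` in the role of `D†`. -/
def complPseudoPrincipalPivot (A : Matrix m n R) (B : Matrix m p R) (C : Matrix s n R)
    (Dd : Matrix p s R) : Matrix (m ⊕ p) (n ⊕ s) R :=
  fromBlocks (A - B * Dd * C) (B * Dd) (-(Dd * C)) Dd

variable {A : Matrix m n R} {B : Matrix m p R} {C : Matrix s n R} {D : Matrix s p R}
  {Ad : Matrix n m R} {Dd : Matrix p s R}

theorem pseudoPrincipalPivot_mul_complPseudoPrincipalPivot
    (hCA : C * Ad * A = C) (hDC : D * Dd * C = C) :
    pseudoPrincipalPivot Ad B C D * complPseudoPrincipalPivot A B C Dd =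
      fromBlocks (Ad * A) 0 0 (D * Dd) := by
  simp only [pseudoPrincipalPivot, complPseudoPrincipalPivot, fromBlocks_multiply,
    Matrix.mul_sub, Matrix.sub_mul, Matrix.mul_neg, Matrix.neg_mul, neg_neg, ← Matrix.mul_assoc,
    hCA, hDC]
  congr 1 <;> abel

theorem complPseudoPrincipalPivot_mul_pseudoPrincipalPivot
    (hAB : A * Ad * B = B) (hBD : B * Dd * D = B) :
    complPseudoPrincipalPivot A B C Dd * pseudoPrincipalPivot Ad B C D =
      fromBlocks (A * Ad) 0 0 (Dd * D) := by
  simp only [pseudoPrincipalPivot, complPseudoPrincipalPivot, fromBlocks_multiply,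
    Matrix.mul_sub, Matrix.sub_mul, Matrix.mul_neg, Matrix.neg_mul, neg_neg, ← Matrix.mul_assoc,
    hAB, hBD]
  congr 1 <;> abel

end PivotTransform

end Matrix

theorem isMoorePenrose_pseudoPrincipalPivot {m n p s : Type*} [Fintype m] [Fintype n]
    [Fintype p] [Fintype s] [DecidableEq m] [DecidableEq n] [DecidableEq p] [DecidableEq s]
    {A : Matrix m n ℝ} {B : Matrix m p ℝ} {C : Matrix s n ℝ} {D : Matrix s p ℝ}
    {Ad : Matrix n m ℝ} {Dd : Matrix p s ℝ} (hA : IsMoorePenrose A Ad)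
    (hD : IsMoorePenrose D Dd) (hAB : A * Ad * B = B) (hCA : C * Ad * A = C)
    (hDC : D * Dd * C = C) (hBD : B * Dd * D = B) :
    IsMoorePenrose (pseudoPrincipalPivot Ad B C D) (complPseudoPrincipalPivot A B C Dd) := by
  obtain ⟨hA₁, hA₂, hA₃, hA₄⟩ := hA
  obtain ⟨hD₁, hD₂, hD₃, hD₄⟩ := hD
  have hHJ := pseudoPrincipalPivot_mul_complPseudoPrincipalPivot (B := B) hCA hDC
  have hJH := complPseudoPrincipalPivot_mul_pseudoPrincipalPivot (C := C) hAB hBD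
  refine ⟨?_, ?_, ?_, ?_⟩
  · rw [hHJ]
    simp only [pseudoPrincipalPivot, fromBlocks_multiply, Matrix.mul_sub, Matrix.mul_neg,
      Matrix.zero_mul, add_zero, zero_add, sub_self, neg_zero, ← Matrix.mul_assoc,
      hA₂, hD₁, hDC]
  · rw [hJH]
    simp only [complPseudoPrincipalPivot, fromBlocks_multiply, Matrix.mul_sub, Matrix.mul_neg,
      Matrix.zero_mul, add_zero, zero_add, sub_self, neg_zero, ← Matrix.mul_assoc,
      hA₁, hD₂, hAB]
  · rw [hHJ, fromBlocks_transpose, hA₄, hD₃, Matrix.transpose_zero, Matrix.transpose_zero]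
  · rw [hJH, fromBlocks_transpose, hA₃, hD₄, Matrix.transpose_zero, Matrix.transpose_zero]

theorem stmt2
    {m n s p : ℕ}
    (A : Matrix (Fin m) (Fin n) ℝ) (B : Matrix (Fin m) (Fin p) ℝ)
    (C : Matrix (Fin s) (Fin n) ℝ) (D : Matrix (Fin s) (Fin p) ℝ)
    (Ad : Matrix (Fin n) (Fin m) ℝ) (hA : IsMoorePenrose A Ad)
    (Dd : Matrix (Fin p) (Fin s) ℝ) (hD : IsMoorePenrose D Dd)
    (hB : LinearMap.range (Matrix.mulVecLin (B)) ≤ LinearMap.range (Matrix.mulVecLin (A)))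
    (hCt : LinearMap.range (Matrix.mulVecLin (Cᵀ)) ≤ LinearMap.range (Matrix.mulVecLin (Aᵀ)))
    (hC : LinearMap.range (Matrix.mulVecLin (C)) ≤ LinearMap.range (Matrix.mulVecLin (D)))
    (hBt : LinearMap.range (Matrix.mulVecLin (Bᵀ)) ≤ LinearMap.range (Matrix.mulVecLin (Dᵀ)))
 :
    IsMoorePenrose (Matrix.fromBlocks Ad (-(Ad * B)) (C * Ad) (D - C * Ad * B))
      (Matrix.fromBlocks (A - B * Dd * C) (B * Dd) (-(Dd * C)) Dd) :=
  isMoorePenrose_pseudoPrincipalPivot hA hD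
    (mul_mul_eq_of_range_mulVecLin_le_s2 hA.1 hB)
    (mul_mul_eq_of_range_mulVecLin_transpose_le_s2 hA.1 hCt)
    (mul_mul_eq_of_range_mulVecLin_le_s2 hD.1 hC)
    (mul_mul_eq_of_range_mulVecLin_transpose_le_s2 hD.1 hBt)
end

section
/- Under the hypotheses R(B) ⊆ R(A), R(Cᵀ) ⊆ R(Aᵀ), R(C) ⊆ R(D), R(Bᵀ) ⊆ R(Dᵀ), the product JH equals the block diagonal matrix [[AA†, 0],[0, D†D]], where H = [[A†, -A†B],[CA†, F]], J = [[G, BD†],[-D†C, D†]], F = D - CA†B, G = A - BD†C. -/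
open Matrix LinearMap

/-! Only the (1,2) block of `J * H` is not an identity of the free expansion: it equals
`B * D† * D - A * A† * B`, and both products reduce to `B` because the columns of `B` lie in
`R(A)` and its rows in the row space of `D`, on which `A * A†` and `D† * D` act as the identity. -/

namespace Matrix

variable {R l m n : Type*} [CommSemiring R] [Fintype l] [Fintype m] [Fintype n] [DecidableEq n]
  {M : Matrix l m R} {X : Matrix m l R}

theorem mul_mul_eq_of_range_mulVecLin_le_s3 {N : Matrix l n R} (hM : M * X * M = M)
    (h : range N.mulVecLin ≤ range M.mulVecLin) : M * X * N = N := by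
  refine ext_of_mulVec_single fun j => ?_
  obtain ⟨w, hw⟩ := h ⟨Pi.single j 1, rfl⟩
  simp only [mulVecLin_apply] at hw
  rw [← mulVec_mulVec, ← hw, mulVec_mulVec, hM]

theorem mul_mul_eq_of_range_mulVecLin_transpose_le_s3 {N : Matrix n m R} (hM : M * X * M = M)
    (h : range Nᵀ.mulVecLin ≤ range Mᵀ.mulVecLin) : N * X * M = N := by
  have hMt : Mᵀ * Xᵀ * Mᵀ = Mᵀ := by
    rw [← transpose_mul, ← transpose_mul, ← Matrix.mul_assoc, hM]
  apply transpose_injective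
  rw [transpose_mul, transpose_mul, ← Matrix.mul_assoc]
  exact mul_mul_eq_of_range_mulVecLin_le_s3 hMt h

end Matrix

theorem stmt3_general
    {m n s p : ℕ}
    (A : Matrix (Fin m) (Fin n) ℝ) (B : Matrix (Fin m) (Fin p) ℝ)
    (C : Matrix (Fin s) (Fin n) ℝ) (D : Matrix (Fin s) (Fin p) ℝ)
    (Ad : Matrix (Fin n) (Fin m) ℝ) (hA : IsMoorePenrose A Ad)
    (Dd : Matrix (Fin p) (Fin s) ℝ) (hD : IsMoorePenrose D Dd)
    (hB : LinearMap.range (Matrix.mulVecLin (B)) ≤ LinearMap.range (Matrix.mulVecLin (A)))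
    (hBt : LinearMap.range (Matrix.mulVecLin (Bᵀ)) ≤ LinearMap.range (Matrix.mulVecLin (Dᵀ)))
 :
    Matrix.fromBlocks (A - B * Dd * C) (B * Dd) (-(Dd * C)) Dd *
      Matrix.fromBlocks Ad (-(Ad * B)) (C * Ad) (D - C * Ad * B)
    = Matrix.fromBlocks (A * Ad) 0 0 (Dd * D) := by
  have hAB : A * Ad * B = B := mul_mul_eq_of_range_mulVecLin_le_s3 hA.1 hB
  have hBD : B * Dd * D = B := mul_mul_eq_of_range_mulVecLin_transpose_le_s3 hD.1 hBt
  rw [Matrix.mul_assoc] at hAB hBD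
  rw [fromBlocks_multiply, fromBlocks_inj]
  refine ⟨?_, ?_, ?_, ?_⟩ <;>
    simp only [Matrix.sub_mul, Matrix.mul_sub, Matrix.neg_mul, Matrix.mul_neg, neg_neg,
      Matrix.mul_assoc, hAB, hBD] <;>
    abel

theorem stmt3
    {m n s p : ℕ}
    (A : Matrix (Fin m) (Fin n) ℝ) (B : Matrix (Fin m) (Fin p) ℝ)
    (C : Matrix (Fin s) (Fin n) ℝ) (D : Matrix (Fin s) (Fin p) ℝ)
    (Ad : Matrix (Fin n) (Fin m) ℝ) (hA : IsMoorePenrose A Ad)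
    (Dd : Matrix (Fin p) (Fin s) ℝ) (hD : IsMoorePenrose D Dd)
    (hB : LinearMap.range (Matrix.mulVecLin (B)) ≤ LinearMap.range (Matrix.mulVecLin (A)))
    (hCt : LinearMap.range (Matrix.mulVecLin (Cᵀ)) ≤ LinearMap.range (Matrix.mulVecLin (Aᵀ)))
    (hC : LinearMap.range (Matrix.mulVecLin (C)) ≤ LinearMap.range (Matrix.mulVecLin (D)))
    (hBt : LinearMap.range (Matrix.mulVecLin (Bᵀ)) ≤ LinearMap.range (Matrix.mulVecLin (Dᵀ)))
 :
    Matrix.fromBlocks (A - B * Dd * C) (B * Dd) (-(Dd * C)) Dd *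
      Matrix.fromBlocks Ad (-(Ad * B)) (C * Ad) (D - C * Ad * B)
    = Matrix.fromBlocks (A * Ad) 0 0 (Dd * D) :=
  stmt3_general A B C D Ad hA Dd hD hB hBt
end

section
/- Under the hypotheses R(B) ⊆ R(A), R(Cᵀ) ⊆ R(Aᵀ), R(C) ⊆ R(D), R(Bᵀ) ⊆ R(Dᵀ), the product HJ equals the block diagonal matrix [[A†A, 0],[0, DD†]], where H = [[A†, -A†B],[CA†, F]], J = [[G, BD†],[-D†C, D†]], F = D - CA†B, G = A - BD†C. -/
open Matrix LinearMap

/-!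
Since `A A† A = A` and `D D† D = D`, the range inclusions `R(C) ⊆ R(D)` and `R(Cᵀ) ⊆ R(Aᵀ)`
give `D D† C = C` and `C A† A = C`. Multiplying the blocks out, the only entry of `H J` that
does not cancel formally is the lower left one, `C A† A - D D† C`, which these two identities
make zero.
-/

namespace Matrix

variable {R l m o : Type*} [CommSemiring R] [Fintype l] [Fintype m] [Fintype o]
  {N : Matrix l m R} {X : Matrix m l R}

theorem mul_mul_eq_of_range_le {M : Matrix l o R} (hN : N * X * N = N)
    (h : LinearMap.range M.mulVecLin ≤ LinearMap.range N.mulVecLin) : N * X * M = M := by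
  refine ext_iff_mulVec.2 fun v => ?_
  obtain ⟨w, hw⟩ := h ⟨v, rfl⟩
  simp only [mulVecLin_apply] at hw
  rw [← mulVec_mulVec, ← hw, mulVec_mulVec, hN]

theorem mul_mul_eq_of_range_transpose_le {M : Matrix o m R} (hN : N * X * N = N)
    (h : LinearMap.range Mᵀ.mulVecLin ≤ LinearMap.range Nᵀ.mulVecLin) : M * X * N = M := by
  have hNt : Nᵀ * Xᵀ * Nᵀ = Nᵀ := by
    simpa only [transpose_mul, Matrix.mul_assoc] using congrArg transpose hN
  simpa only [transpose_mul, transpose_transpose, Matrix.mul_assoc] using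
    congrArg transpose (mul_mul_eq_of_range_le hNt h)

end Matrix

theorem Matrix.fromBlocks_mul_fromBlocks_eq_fromBlocks_diag {R m n s p : Type*} [Ring R]
    [Fintype m] [Fintype n] [Fintype s] [Fintype p]
    (A : Matrix m n R) (B : Matrix m p R) (C : Matrix s n R) (D : Matrix s p R)
    (Ad : Matrix n m R) (Dd : Matrix p s R) (hCA : C * Ad * A = C) (hDC : D * Dd * C = C) :
    fromBlocks Ad (-(Ad * B)) (C * Ad) (D - C * Ad * B) *
      fromBlocks (A - B * Dd * C) (B * Dd) (-(Dd * C)) Dd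
    = fromBlocks (Ad * A) 0 0 (D * Dd) := by
  rw [fromBlocks_multiply]
  congr 1
  · simp only [Matrix.mul_sub, Matrix.neg_mul, Matrix.mul_neg, neg_neg, Matrix.mul_assoc,
      sub_add_cancel]
  · simp only [Matrix.neg_mul, Matrix.mul_assoc, add_neg_cancel]
  · calc C * Ad * (A - B * Dd * C) + (D - C * Ad * B) * -(Dd * C)
          = C * Ad * A - D * Dd * C := by
            simp only [Matrix.mul_sub, Matrix.sub_mul, Matrix.mul_neg, Matrix.mul_assoc]; abel
        _ = 0 := by rw [hCA, hDC, sub_self]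
  · simp only [Matrix.sub_mul, Matrix.mul_assoc, add_sub_cancel]

theorem stmt4_general
    {m n s p : ℕ}
    (A : Matrix (Fin m) (Fin n) ℝ) (B : Matrix (Fin m) (Fin p) ℝ)
    (C : Matrix (Fin s) (Fin n) ℝ) (D : Matrix (Fin s) (Fin p) ℝ)
    (Ad : Matrix (Fin n) (Fin m) ℝ) (hA : IsMoorePenrose A Ad)
    (Dd : Matrix (Fin p) (Fin s) ℝ) (hD : IsMoorePenrose D Dd)
    (hCt : LinearMap.range (Matrix.mulVecLin (Cᵀ)) ≤ LinearMap.range (Matrix.mulVecLin (Aᵀ)))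
    (hC : LinearMap.range (Matrix.mulVecLin (C)) ≤ LinearMap.range (Matrix.mulVecLin (D)))
 :
    Matrix.fromBlocks Ad (-(Ad * B)) (C * Ad) (D - C * Ad * B) *
      Matrix.fromBlocks (A - B * Dd * C) (B * Dd) (-(Dd * C)) Dd
    = Matrix.fromBlocks (Ad * A) 0 0 (D * Dd) :=
  fromBlocks_mul_fromBlocks_eq_fromBlocks_diag A B C D Ad Dd
    (mul_mul_eq_of_range_transpose_le hA.1 hCt) (mul_mul_eq_of_range_le hD.1 hC)

theorem stmt4
    {m n s p : ℕ}
    (A : Matrix (Fin m) (Fin n) ℝ) (B : Matrix (Fin m) (Fin p) ℝ)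
    (C : Matrix (Fin s) (Fin n) ℝ) (D : Matrix (Fin s) (Fin p) ℝ)
    (Ad : Matrix (Fin n) (Fin m) ℝ) (hA : IsMoorePenrose A Ad)
    (Dd : Matrix (Fin p) (Fin s) ℝ) (hD : IsMoorePenrose D Dd)
    (hB : LinearMap.range (Matrix.mulVecLin (B)) ≤ LinearMap.range (Matrix.mulVecLin (A)))
    (hCt : LinearMap.range (Matrix.mulVecLin (Cᵀ)) ≤ LinearMap.range (Matrix.mulVecLin (Aᵀ)))
    (hC : LinearMap.range (Matrix.mulVecLin (C)) ≤ LinearMap.range (Matrix.mulVecLin (D)))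
    (hBt : LinearMap.range (Matrix.mulVecLin (Bᵀ)) ≤ LinearMap.range (Matrix.mulVecLin (Dᵀ)))
 :
    Matrix.fromBlocks Ad (-(Ad * B)) (C * Ad) (D - C * Ad * B) *
      Matrix.fromBlocks (A - B * Dd * C) (B * Dd) (-(Dd * C)) Dd
    = Matrix.fromBlocks (Ad * A) 0 0 (D * Dd) :=
  stmt4_general A B C D Ad hA Dd hD hCt hC
end

section
/- Suppose R(Bᵀ) ⊆ R(Dᵀ), R(C) ⊆ R(D), R(BD†) ⊆ R(G), and R((D†C)ᵀ) ⊆ R(Gᵀ), where G = A - BD†C. Then the Moore-Penrose inverse of M = [[A,B],[C,D]] is [[G†, -G†BD†],[-D†CG†, D† + D†CG†BD†]]. -/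
/-!
Since `Y Y† Y = Y`, an inclusion `R(X) ⊆ R(Y)` gives `Y Y† X = X`; so the range inclusions
yield the four absorption identities
`D D† C = C`, `B D† D = B`, `G G† (B D†) = B D†` and `(D† C) G† G = D† C`.
With them, writing `X` for the proposed inverse, both products are block diagonal:
`M X = diag(G G†, D D†)` and `X M = diag(G† G, D† D)`. Hence they are symmetric, and the
equations `M X M = M`, `X M X = X` reduce blockwise to the Penrose equations of `G` and `D`.
-/

open Matrix LinearMap

namespace Matrix

section RangeAbsorption

variable {R : Type*} [CommSemiring R] {l m n : Type*} [Fintype l] [Fintype m] [Fintype n]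

theorem mul_mul_eq_of_range_le_s6 {X : Matrix m l R} {Y : Matrix m n R} {Yd : Matrix n m R}
    (hY : Y * Yd * Y = Y) (h : range X.mulVecLin ≤ range Y.mulVecLin) :
    Y * Yd * X = X := by
  refine ext_iff_mulVec.2 fun v => ?_
  obtain ⟨u, hu⟩ := h ⟨v, rfl⟩
  rw [mulVecLin_apply, mulVecLin_apply] at hu
  rw [← mulVec_mulVec, ← hu, mulVec_mulVec, hY]

theorem mul_mul_eq_of_range_transpose_le_s6 {X : Matrix l n R} {Y : Matrix m n R}
    {Yd : Matrix n m R} (hY : Y * Yd * Y = Y) (h : range Xᵀ.mulVecLin ≤ range Yᵀ.mulVecLin) :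
    X * Yd * Y = X := by
  have hYt : Yᵀ * Ydᵀ * Yᵀ = Yᵀ := by
    rw [← transpose_mul, ← transpose_mul, ← Matrix.mul_assoc, hY]
  simpa [transpose_mul, Matrix.mul_assoc] using congrArg transpose (mul_mul_eq_of_range_le_s6 hYt h)

end RangeAbsorption

section BanachiewiczSchur

variable {R : Type*} [Ring R] {l m n o : Type*} [Fintype l] [Fintype m] [Fintype n] [Fintype o]
  {A : Matrix l n R} {B : Matrix l o R} {C : Matrix m n R} {D : Matrix m o R}
  {Dd : Matrix o m R} {Gd : Matrix n l R}

/-- The candidate inverse of `fromBlocks A B C D`, with `Dd`, `Gd` in the roles of `D†` and `G†`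
for `G = A - B * Dd * C`. -/
def banachiewiczSchurForm (B : Matrix l o R) (C : Matrix m n R) (Dd : Matrix o m R)
    (Gd : Matrix n l R) : Matrix (n ⊕ o) (l ⊕ m) R :=
  fromBlocks Gd (-(Gd * B * Dd)) (-(Dd * C * Gd)) (Dd + Dd * C * Gd * B * Dd)

theorem fromBlocks_mul_banachiewiczSchurForm (hC : D * Dd * C = C)
    (hBD : (A - B * Dd * C) * Gd * (B * Dd) = B * Dd) :
    fromBlocks A B C D * banachiewiczSchurForm B C Dd Gd
      = fromBlocks ((A - B * Dd * C) * Gd) 0 0 (D * Dd) := by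
  rw [banachiewiczSchurForm, fromBlocks_multiply, fromBlocks_inj]
  refine ⟨?_, ?_, ?_, ?_⟩
  · simp only [Matrix.mul_neg, Matrix.sub_mul, Matrix.mul_assoc]; abel
  · calc A * -(Gd * B * Dd) + B * (Dd + Dd * C * Gd * B * Dd)
        = B * Dd - (A - B * Dd * C) * Gd * (B * Dd) := by
          simp only [Matrix.mul_neg, Matrix.mul_add, Matrix.sub_mul, Matrix.mul_assoc]; abel
      _ = 0 := by rw [hBD, sub_self]
  · calc C * Gd + D * -(Dd * C * Gd) = C * Gd - D * Dd * C * Gd := by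
          simp only [Matrix.mul_neg, Matrix.mul_assoc]; abel
      _ = 0 := by rw [hC, sub_self]
  · calc C * -(Gd * B * Dd) + D * (Dd + Dd * C * Gd * B * Dd)
        = D * Dd + (D * Dd * C - C) * Gd * B * Dd := by
          simp only [Matrix.mul_neg, Matrix.mul_add, Matrix.sub_mul, Matrix.mul_assoc]; abel
      _ = D * Dd := by
          rw [hC, sub_self, Matrix.zero_mul, Matrix.zero_mul, Matrix.zero_mul, add_zero]

theorem banachiewiczSchurForm_mul_fromBlocks (hB : B * Dd * D = B)
    (hDC : Dd * C * Gd * (A - B * Dd * C) = Dd * C) :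
    banachiewiczSchurForm B C Dd Gd * fromBlocks A B C D
      = fromBlocks (Gd * (A - B * Dd * C)) 0 0 (Dd * D) := by
  rw [banachiewiczSchurForm, fromBlocks_multiply, fromBlocks_inj]
  refine ⟨?_, ?_, ?_, ?_⟩
  · simp only [Matrix.neg_mul, Matrix.mul_sub, Matrix.mul_assoc]; abel
  · calc Gd * B + -(Gd * B * Dd) * D = Gd * (B - B * Dd * D) := by
          simp only [Matrix.neg_mul, Matrix.mul_sub, Matrix.mul_assoc]; abel
      _ = 0 := by rw [hB, sub_self, Matrix.mul_zero]
  · calc -(Dd * C * Gd) * A + (Dd + Dd * C * Gd * B * Dd) * C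
        = Dd * C - Dd * C * Gd * (A - B * Dd * C) := by
          simp only [Matrix.neg_mul, Matrix.add_mul, Matrix.mul_sub, Matrix.mul_assoc]; abel
      _ = 0 := by rw [hDC, sub_self]
  · calc -(Dd * C * Gd) * B + (Dd + Dd * C * Gd * B * Dd) * D
        = Dd * D + Dd * C * Gd * (B * Dd * D - B) := by
          simp only [Matrix.neg_mul, Matrix.add_mul, Matrix.mul_sub, Matrix.mul_assoc]; abel
      _ = Dd * D := by rw [hB, sub_self, Matrix.mul_zero, add_zero]

end BanachiewiczSchur

theorem isMoorePenrose_banachiewiczSchurForm {l m n o : Type*} [Fintype l] [Fintype m]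
    [Fintype n] [Fintype o] [DecidableEq l] [DecidableEq m] [DecidableEq n] [DecidableEq o]
    {A : Matrix l n ℝ} {B : Matrix l o ℝ} {C : Matrix m n ℝ} {D : Matrix m o ℝ}
    {Dd : Matrix o m ℝ} {Gd : Matrix n l ℝ}
    (hD : IsMoorePenrose D Dd) (hG : IsMoorePenrose (A - B * Dd * C) Gd)
    (hC : D * Dd * C = C) (hB : B * Dd * D = B)
    (hBD : (A - B * Dd * C) * Gd * (B * Dd) = B * Dd)
    (hDC : Dd * C * Gd * (A - B * Dd * C) = Dd * C) :
    IsMoorePenrose (fromBlocks A B C D) (banachiewiczSchurForm B C Dd Gd) := by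
  obtain ⟨hD₁, hD₂, hD₃, hD₄⟩ := hD
  obtain ⟨hG₁, hG₂, hG₃, hG₄⟩ := hG
  have hMX := fromBlocks_mul_banachiewiczSchurForm hC hBD
  have hXM := banachiewiczSchurForm_mul_fromBlocks hB hDC
  refine ⟨?_, ?_, ?_, ?_⟩
  · rw [Matrix.mul_assoc, hXM, fromBlocks_multiply, fromBlocks_inj]
    simp only [Matrix.mul_zero, add_zero, zero_add]
    refine ⟨?_, by rw [← Matrix.mul_assoc, hB], ?_, by rw [← Matrix.mul_assoc, hD₁]⟩
    · calc A * (Gd * (A - B * Dd * C))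
          = (A - B * Dd * C) * Gd * (A - B * Dd * C) + B * (Dd * C * Gd * (A - B * Dd * C)) := by
            simp only [Matrix.mul_sub, Matrix.sub_mul, Matrix.mul_assoc]
            abel
        _ = A := by rw [hG₁, hDC, ← Matrix.mul_assoc, sub_add_cancel]
    · calc C * (Gd * (A - B * Dd * C)) = D * (Dd * C * Gd * (A - B * Dd * C)) := by
            nth_rw 1 [← hC]
            simp only [Matrix.mul_assoc]
        _ = C := by rw [hDC, ← Matrix.mul_assoc, hC]
  · rw [hXM, banachiewiczSchurForm, fromBlocks_multiply, fromBlocks_inj]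
    simp only [Matrix.zero_mul, add_zero, zero_add, Matrix.mul_neg, neg_zero, Matrix.mul_add,
      ← Matrix.mul_assoc, hG₂, hD₂, and_self]
  · rw [hMX, fromBlocks_transpose, hG₃, hD₃, transpose_zero, transpose_zero]
  · rw [hXM, fromBlocks_transpose, hG₄, hD₄, transpose_zero, transpose_zero]

end Matrix

theorem stmt6
    {m n s p : ℕ}
    (A : Matrix (Fin m) (Fin n) ℝ) (B : Matrix (Fin m) (Fin p) ℝ)
    (C : Matrix (Fin s) (Fin n) ℝ) (D : Matrix (Fin s) (Fin p) ℝ)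
    (Dd : Matrix (Fin p) (Fin s) ℝ) (hD : IsMoorePenrose D Dd)
    (Gd : Matrix (Fin n) (Fin m) ℝ) (hG : IsMoorePenrose (A - B * Dd * C) Gd)
    (hBt : LinearMap.range (Matrix.mulVecLin (Bᵀ)) ≤ LinearMap.range (Matrix.mulVecLin (Dᵀ)))
    (hC : LinearMap.range (Matrix.mulVecLin (C)) ≤ LinearMap.range (Matrix.mulVecLin (D)))
    (hBD : LinearMap.range (Matrix.mulVecLin (B * Dd)) ≤ LinearMap.range (Matrix.mulVecLin (A - B * Dd * C)))
    (hDC : LinearMap.range (Matrix.mulVecLin ((Dd * C)ᵀ)) ≤ LinearMap.range (Matrix.mulVecLin ((A - B * Dd * C)ᵀ))) :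
    IsMoorePenrose (Matrix.fromBlocks A B C D)
      (Matrix.fromBlocks Gd (-(Gd * B * Dd)) (-(Dd * C * Gd)) (Dd + Dd * C * Gd * B * Dd)) :=
  isMoorePenrose_banachiewiczSchurForm hD hG (mul_mul_eq_of_range_le_s6 hD.1 hC)
    (mul_mul_eq_of_range_transpose_le_s6 hD.1 hBt) (mul_mul_eq_of_range_le_s6 hG.1 hBD)
    (mul_mul_eq_of_range_transpose_le_s6 hG.1 hDC)
end

section
/- Suppose all eight inclusions of the two block-inverse theorems hold: R(Cᵀ) ⊆ R(Aᵀ), R(B) ⊆ R(A), R((A†B)ᵀ) ⊆ R(Fᵀ), R(CA†) ⊆ R(F), R(C) ⊆ R(D), R(Bᵀ) ⊆ R(Dᵀ), R(BD†) ⊆ R(G), R((D†C)ᵀ) ⊆ R(Gᵀ), where F = D - CA†B and G = A - BD†C. Then M† = [[G†, -A†BF†],[-D†CG†, F†]]. -/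
/-!
Under the first four inclusions, `M†` has the Banachiewicz–Schur form built from `A†` and the
Schur complement `F = D - CA†B`; under the last four, applied to the block-swapped matrix, it has
the analogous form built from `D†` and `G = A - BD†C`. Uniqueness of the Moore–Penrose inverse
equates the two, giving `G† = A† + A†BF†CA†` and `D†CG† = F†CA†`, which is the mixed formula.
-/

open Matrix LinearMap

variable {l m n o : Type*} [Fintype l] [Fintype m] [Fintype n] [Fintype o]

theorem Matrix.mul_mul_eq_of_range_le_s9 {A : Matrix m n ℝ} {X : Matrix n m ℝ} {B : Matrix m l ℝ}
    (hA : A * X * A = A) (h : range (mulVecLin B) ≤ range (mulVecLin A)) :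
    A * X * B = B := by
  refine ext_iff_mulVec.2 fun v => ?_
  obtain ⟨w, hw⟩ : B *ᵥ v ∈ range (mulVecLin A) := h ⟨v, rfl⟩
  rw [mulVecLin_apply] at hw
  rw [← mulVec_mulVec, ← hw, mulVec_mulVec, hA]

theorem Matrix.mul_mul_eq_of_range_transpose_le_s9 {A : Matrix m n ℝ} {X : Matrix n m ℝ}
    {C : Matrix l n ℝ} (hA : A * X * A = A) (h : range (mulVecLin Cᵀ) ≤ range (mulVecLin Aᵀ)) :
    C * X * A = C := by
  have hAt : Aᵀ * Xᵀ * Aᵀ = Aᵀ := by simp only [← transpose_mul, ← Matrix.mul_assoc, hA]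
  simpa only [← transpose_mul, ← Matrix.mul_assoc, transpose_inj] using
    mul_mul_eq_of_range_le_s9 hAt h

variable [DecidableEq l] [DecidableEq m] [DecidableEq n] [DecidableEq o]

namespace IsMoorePenrose

theorem unique {A : Matrix m n ℝ} {X Y : Matrix n m ℝ} (hX : IsMoorePenrose A X)
    (hY : IsMoorePenrose A Y) : X = Y := by
  obtain ⟨hX₁, hX₂, hX₃, hX₄⟩ := hX
  obtain ⟨hY₁, hY₂, hY₃, hY₄⟩ := hY
  have hAX : A * X = A * Y := by
    calc A * X = (A * Y * A) * X := by rw [hY₁]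
      _ = (A * Y)ᵀ * (A * X)ᵀ := by rw [hY₃, hX₃, Matrix.mul_assoc]
      _ = (A * X * A * Y)ᵀ := by simp only [transpose_mul, Matrix.mul_assoc]
      _ = A * Y := by rw [hX₁, hY₃]
  have hXA : X * A = Y * A := by
    calc X * A = X * (A * Y * A) := by rw [hY₁]
      _ = (X * A)ᵀ * (Y * A)ᵀ := by rw [hX₄, hY₄, Matrix.mul_assoc, Matrix.mul_assoc]
      _ = (A * X * A)ᵀ * Yᵀ := by simp only [transpose_mul, Matrix.mul_assoc]
      _ = Y * A := by rw [hX₁, ← transpose_mul, hY₄]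
  calc X = X * A * X := hX₂.symm
    _ = Y * A * Y := by rw [Matrix.mul_assoc, hAX, ← Matrix.mul_assoc, hXA]
    _ = Y := hY₂

theorem submatrix {A : Matrix m n ℝ} {X : Matrix n m ℝ} (h : IsMoorePenrose A X)
    (e : l ≃ m) (f : o ≃ n) : IsMoorePenrose (A.submatrix e f) (X.submatrix f e) := by
  obtain ⟨h₁, h₂, h₃, h₄⟩ := h
  simp only [IsMoorePenrose, submatrix_mul_equiv, transpose_submatrix, h₁, h₂, h₃, h₄, and_self]

theorem fromBlocks_of_mul_eq {A : Matrix m n ℝ} {B : Matrix m o ℝ} {C : Matrix l n ℝ}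
    {F : Matrix l o ℝ} {Ad : Matrix n m ℝ} {Fd : Matrix o l ℝ}
    (hA : IsMoorePenrose A Ad) (hF : IsMoorePenrose F Fd)
    (hAB : A * Ad * B = B) (hCA : C * Ad * A = C) (hFC : F * Fd * C = C) (hBF : B * Fd * F = B) :
    IsMoorePenrose (fromBlocks A B C (F + C * Ad * B))
      (fromBlocks (Ad + Ad * B * Fd * C * Ad) (-(Ad * B * Fd)) (-(Fd * C * Ad)) Fd) := by
  obtain ⟨hA₁, hA₂, hA₃, hA₄⟩ := hA
  obtain ⟨hF₁, hF₂, hF₃, hF₄⟩ := hF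
  have hCA' : C * (Ad * A) = C := by rw [← Matrix.mul_assoc, hCA]
  have hBF' : B * (Fd * F) = B := by rw [← Matrix.mul_assoc, hBF]
  have hMX : fromBlocks A B C (F + C * Ad * B) *
      fromBlocks (Ad + Ad * B * Fd * C * Ad) (-(Ad * B * Fd)) (-(Fd * C * Ad)) Fd =
      fromBlocks (A * Ad) 0 0 (F * Fd) := by
    simp only [fromBlocks_multiply, fromBlocks_inj, Matrix.mul_add, Matrix.add_mul,
      Matrix.mul_neg, ← Matrix.mul_assoc, hAB, hFC]
    refine ⟨?_, ?_, ?_, ?_⟩ <;> abel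
  have hXM : fromBlocks (Ad + Ad * B * Fd * C * Ad) (-(Ad * B * Fd)) (-(Fd * C * Ad)) Fd *
      fromBlocks A B C (F + C * Ad * B) = fromBlocks (Ad * A) 0 0 (Fd * F) := by
    simp only [fromBlocks_multiply, fromBlocks_inj, Matrix.mul_add, Matrix.add_mul,
      Matrix.neg_mul, Matrix.mul_assoc, hCA', hBF']
    refine ⟨?_, ?_, ?_, ?_⟩ <;> abel
  refine ⟨?_, ?_, ?_, ?_⟩
  · simp only [hMX, fromBlocks_multiply, Matrix.zero_mul, add_zero, zero_add, Matrix.mul_add,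
      ← Matrix.mul_assoc, hA₁, hAB, hF₁, hFC]
  · simp only [hXM, fromBlocks_multiply, Matrix.zero_mul, neg_zero, add_zero, zero_add,
      Matrix.mul_add, Matrix.mul_neg, ← Matrix.mul_assoc, hA₂, hF₂]
  · rw [hMX, fromBlocks_transpose, hA₃, hF₃, transpose_zero, transpose_zero]
  · rw [hXM, fromBlocks_transpose, hA₄, hF₄, transpose_zero, transpose_zero]

theorem fromBlocks_of_range_le {A : Matrix m n ℝ} {B : Matrix m o ℝ} {C : Matrix l n ℝ}
    {D : Matrix l o ℝ} {Ad : Matrix n m ℝ} {Fd : Matrix o l ℝ}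
    (hA : IsMoorePenrose A Ad) (hF : IsMoorePenrose (D - C * Ad * B) Fd)
    (hCA : range (mulVecLin Cᵀ) ≤ range (mulVecLin Aᵀ))
    (hBA : range (mulVecLin B) ≤ range (mulVecLin A))
    (hBF : range (mulVecLin (Ad * B)ᵀ) ≤ range (mulVecLin (D - C * Ad * B)ᵀ))
    (hCF : range (mulVecLin (C * Ad)) ≤ range (mulVecLin (D - C * Ad * B))) :
    IsMoorePenrose (fromBlocks A B C D)
      (fromBlocks (Ad + Ad * B * Fd * C * Ad) (-(Ad * B * Fd)) (-(Fd * C * Ad)) Fd) := by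
  set F := D - C * Ad * B
  have hAB : A * Ad * B = B := mul_mul_eq_of_range_le_s9 hA.1 hBA
  have hCA : C * Ad * A = C := mul_mul_eq_of_range_transpose_le_s9 hA.1 hCA
  have hFC : F * Fd * C = C := by
    calc F * Fd * C = F * Fd * (C * Ad) * A := by rw [Matrix.mul_assoc _ (C * Ad), hCA]
      _ = C := by rw [mul_mul_eq_of_range_le_s9 hF.1 hCF, hCA]
  have hBF : B * Fd * F = B := by
    calc B * Fd * F = A * (Ad * B * Fd * F) := by simp only [← Matrix.mul_assoc, hAB]
      _ = B := by rw [mul_mul_eq_of_range_transpose_le_s9 hF.1 hBF, ← Matrix.mul_assoc, hAB]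
  simpa only [F, sub_add_cancel] using fromBlocks_of_mul_eq hA hF hAB hCA hFC hBF

theorem fromBlocks_swap {A : Matrix m n ℝ} {B : Matrix m o ℝ} {C : Matrix l n ℝ}
    {D : Matrix l o ℝ} {P : Matrix n m ℝ} {Q : Matrix n l ℝ} {R : Matrix o m ℝ} {S : Matrix o l ℝ}
    (h : IsMoorePenrose (fromBlocks A B C D) (fromBlocks P Q R S)) :
    IsMoorePenrose (fromBlocks D C B A) (fromBlocks S R Q P) := by
  simpa using h.submatrix (Equiv.sumComm l m) (Equiv.sumComm o n)

end IsMoorePenrose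

theorem stmt9
    {m n s p : ℕ}
    (A : Matrix (Fin m) (Fin n) ℝ) (B : Matrix (Fin m) (Fin p) ℝ)
    (C : Matrix (Fin s) (Fin n) ℝ) (D : Matrix (Fin s) (Fin p) ℝ)
    (Ad : Matrix (Fin n) (Fin m) ℝ) (hA : IsMoorePenrose A Ad)
    (Dd : Matrix (Fin p) (Fin s) ℝ) (hD : IsMoorePenrose D Dd)
    (Fd : Matrix (Fin p) (Fin s) ℝ) (hF : IsMoorePenrose (D - C * Ad * B) Fd)
    (Gd : Matrix (Fin n) (Fin m) ℝ) (hG : IsMoorePenrose (A - B * Dd * C) Gd)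
    (hCt : LinearMap.range (Matrix.mulVecLin (Cᵀ)) ≤ LinearMap.range (Matrix.mulVecLin (Aᵀ)))
    (hB : LinearMap.range (Matrix.mulVecLin (B)) ≤ LinearMap.range (Matrix.mulVecLin (A)))
    (hAB : LinearMap.range (Matrix.mulVecLin ((Ad * B)ᵀ)) ≤ LinearMap.range (Matrix.mulVecLin ((D - C * Ad * B)ᵀ)))
    (hCA : LinearMap.range (Matrix.mulVecLin (C * Ad)) ≤ LinearMap.range (Matrix.mulVecLin (D - C * Ad * B)))
    (hC : LinearMap.range (Matrix.mulVecLin (C)) ≤ LinearMap.range (Matrix.mulVecLin (D)))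
    (hBt : LinearMap.range (Matrix.mulVecLin (Bᵀ)) ≤ LinearMap.range (Matrix.mulVecLin (Dᵀ)))
    (hBD : LinearMap.range (Matrix.mulVecLin (B * Dd)) ≤ LinearMap.range (Matrix.mulVecLin (A - B * Dd * C)))
    (hDC : LinearMap.range (Matrix.mulVecLin ((Dd * C)ᵀ)) ≤ LinearMap.range (Matrix.mulVecLin ((A - B * Dd * C)ᵀ)))
 :
    IsMoorePenrose (Matrix.fromBlocks A B C D)
      (Matrix.fromBlocks Gd (-(Ad * B * Fd)) (-(Dd * C * Gd)) Fd) := by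
  have hAF := hA.fromBlocks_of_range_le hF hCt hB hAB hCA
  have hDG := (hD.fromBlocks_of_range_le hG hBt hC hDC hBD).fromBlocks_swap
  obtain ⟨hGd, -, hDCG, -⟩ := fromBlocks_inj.1 (hAF.unique hDG)
  rwa [← hDCG, ← hGd]
end

section
/- If R(B) ⊆ R(A) and R((A†B)ᵀ) ⊆ R(Fᵀ) where F = D - CA†B, then DF†F = D. -/
open Matrix LinearMap

namespace IsMoorePenrose

variable {α β : Type*} [Fintype α] [Fintype β] [DecidableEq α] [DecidableEq β]
  {A : Matrix α β ℝ} {X : Matrix β α ℝ}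

theorem mul_mul_transpose (h : IsMoorePenrose A X) : X * A * Aᵀ = Aᵀ := by
  rw [← h.2.2.2, ← transpose_mul, ← Matrix.mul_assoc, h.1]

/-- `X * A` is the orthogonal projection onto `R(Aᵀ)`, so it fixes every row of `G` lying there. -/
theorem mul_mul_eq_of_range_transpose_le (h : IsMoorePenrose A X) {γ : Type*} [Fintype γ]
    {G : Matrix γ β ℝ} (hG : range (mulVecLin Gᵀ) ≤ range (mulVecLin Aᵀ)) :
    G * (X * A) = G := by
  have hfix : X * A * Gᵀ = Gᵀ := by
    refine mulVec_injective (funext fun v => ?_)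
    obtain ⟨w, hw⟩ := hG ⟨v, rfl⟩
    rw [mulVecLin_apply, mulVecLin_apply] at hw
    rw [← mulVec_mulVec, ← hw, mulVec_mulVec, h.mul_mul_transpose]
  rw [← transpose_transpose G, ← h.2.2.2, ← transpose_mul, hfix]

end IsMoorePenrose

theorem stmt11_general
    {m n s p : ℕ}
    (B : Matrix (Fin m) (Fin p) ℝ)
    (C : Matrix (Fin s) (Fin n) ℝ) (D : Matrix (Fin s) (Fin p) ℝ)
    (Ad : Matrix (Fin n) (Fin m) ℝ)
    (Fd : Matrix (Fin p) (Fin s) ℝ) (hF : IsMoorePenrose (D - C * Ad * B) Fd)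
    (hAB : LinearMap.range (Matrix.mulVecLin ((Ad * B)ᵀ)) ≤ LinearMap.range (Matrix.mulVecLin ((D - C * Ad * B)ᵀ))) :
    D * Fd * (D - C * Ad * B) = D := by
  set F := D - C * Ad * B
  have hD : D = F + C * (Ad * B) := by simp [F, Matrix.mul_assoc]
  calc D * Fd * F = F * Fd * F + C * (Ad * B * (Fd * F)) := by
        nth_rw 1 [hD]; simp only [Matrix.add_mul, Matrix.mul_assoc]
    _ = D := by rw [hF.1, hF.mul_mul_eq_of_range_transpose_le hAB, ← hD]

theorem stmt11
    {m n s p : ℕ}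
    (A : Matrix (Fin m) (Fin n) ℝ) (B : Matrix (Fin m) (Fin p) ℝ)
    (C : Matrix (Fin s) (Fin n) ℝ) (D : Matrix (Fin s) (Fin p) ℝ)
    (Ad : Matrix (Fin n) (Fin m) ℝ) (hA : IsMoorePenrose A Ad)
    (Fd : Matrix (Fin p) (Fin s) ℝ) (hF : IsMoorePenrose (D - C * Ad * B) Fd)
    (hB : LinearMap.range (Matrix.mulVecLin (B)) ≤ LinearMap.range (Matrix.mulVecLin (A)))
    (hAB : LinearMap.range (Matrix.mulVecLin ((Ad * B)ᵀ)) ≤ LinearMap.range (Matrix.mulVecLin ((D - C * Ad * B)ᵀ))) :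
    D * Fd * (D - C * Ad * B) = D :=
  stmt11_general B C D Ad Fd hF hAB
end

section
/- Suppose R(Cᵀ) ⊆ R(Aᵀ) and R((A†B)ᵀ) ⊆ R(Fᵀ), where F = D - CA†B. Then with X = [[A† + A†BF†CA†, -A†BF†],[-F†CA†, F†]] and M = [[A,B],[C,D]], one has XM = [[A†A, 0],[0, F†F]]; in particular XM is symmetric. -/
open Matrix LinearMap

/-!
Both range conditions say that a matrix factors through `A` (resp. through the Schur complement
`F = D - C A† B`), and then multiplying by an inner inverse and back changes nothing:
`C A† A = C` and `A† B F† F = A† B`. With these two identities, the block product `X M` collapses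
to `diag(A† A, F† F)` by direct expansion, and both diagonal blocks are symmetric projections.
-/

section

variable {R : Type*} {l m n o : Type*} [Fintype m] [Fintype n]

theorem Matrix.exists_mul_eq_of_range_mulVecLin_le_s13 [CommSemiring R] [DecidableEq n]
    {P : Matrix l m R} {Q : Matrix l n R}
    (h : LinearMap.range Q.mulVecLin ≤ LinearMap.range P.mulVecLin) :
    ∃ Y : Matrix m n R, P * Y = Q := by
  have hcol : ∀ j, ∃ y, P *ᵥ y = Q.col j := fun j => mulVec_single_one Q j ▸ h ⟨_, rfl⟩
  choose y hy using hcol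
  refine ⟨(of y)ᵀ, ?_⟩
  ext i j
  simpa [mul_apply, mulVec, dotProduct] using congrFun (hy j) i

theorem Matrix.mul_mul_eq_self_of_range_transpose_le [CommSemiring R] [Fintype o] [DecidableEq o]
    {M : Matrix m n R} {Md : Matrix n m R} (hM : M * Md * M = M) {N : Matrix o n R}
    (h : LinearMap.range Nᵀ.mulVecLin ≤ LinearMap.range Mᵀ.mulVecLin) :
    N * Md * M = N := by
  obtain ⟨Y, hY⟩ := exists_mul_eq_of_range_mulVecLin_le_s13 h
  have hN : N = Yᵀ * M := by rw [← transpose_transpose N, ← hY, transpose_mul, transpose_transpose]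
  rw [hN, Matrix.mul_assoc, Matrix.mul_assoc, ← Matrix.mul_assoc M, hM]

end

theorem Matrix.fromBlocks_mul_fromBlocks_eq_of_schur_complement {R m n p s : Type*} [Ring R]
    [Fintype m] [Fintype n] [Fintype p] [Fintype s]
    {A : Matrix m n R} {B : Matrix m p R} {C : Matrix s n R} {D : Matrix s p R}
    {Ad : Matrix n m R} {Fd : Matrix p s R}
    (hC : C * Ad * A = C) (hB : Ad * B * Fd * (D - C * Ad * B) = Ad * B) :
    fromBlocks (Ad + Ad * B * Fd * C * Ad) (-(Ad * B * Fd)) (-(Fd * C * Ad)) Fd * fromBlocks A B C D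
      = fromBlocks (Ad * A) 0 0 (Fd * (D - C * Ad * B)) := by
  rw [Matrix.mul_assoc] at hC
  rw [fromBlocks_multiply, fromBlocks_inj]
  refine ⟨?_, ?_, ?_, ?_⟩
  · simp only [Matrix.add_mul, Matrix.neg_mul, Matrix.mul_assoc, hC]
    abel
  · calc _ = Ad * B - Ad * B * Fd * (D - C * Ad * B) := by
          simp only [Matrix.add_mul, Matrix.neg_mul, Matrix.mul_sub, Matrix.mul_assoc]
          abel
      _ = 0 := by rw [hB, sub_self]
  · simp only [Matrix.neg_mul, Matrix.mul_assoc, hC]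
    abel
  · simp only [Matrix.neg_mul, Matrix.mul_sub, Matrix.mul_assoc]
    abel

theorem stmt13
    {m n s p : ℕ}
    (A : Matrix (Fin m) (Fin n) ℝ) (B : Matrix (Fin m) (Fin p) ℝ)
    (C : Matrix (Fin s) (Fin n) ℝ) (D : Matrix (Fin s) (Fin p) ℝ)
    (Ad : Matrix (Fin n) (Fin m) ℝ) (hA : IsMoorePenrose A Ad)
    (Fd : Matrix (Fin p) (Fin s) ℝ) (hF : IsMoorePenrose (D - C * Ad * B) Fd)
    (hCt : LinearMap.range (Matrix.mulVecLin (Cᵀ)) ≤ LinearMap.range (Matrix.mulVecLin (Aᵀ)))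
    (hAB : LinearMap.range (Matrix.mulVecLin ((Ad * B)ᵀ)) ≤ LinearMap.range (Matrix.mulVecLin ((D - C * Ad * B)ᵀ))) :
    Matrix.fromBlocks (Ad + Ad * B * Fd * C * Ad) (-(Ad * B * Fd)) (-(Fd * C * Ad)) Fd *
        Matrix.fromBlocks A B C D
      = Matrix.fromBlocks (Ad * A) 0 0 (Fd * (D - C * Ad * B)) ∧
    (Matrix.fromBlocks (Ad + Ad * B * Fd * C * Ad) (-(Ad * B * Fd)) (-(Fd * C * Ad)) Fd *
        Matrix.fromBlocks A B C D)ᵀ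
      = Matrix.fromBlocks (Ad + Ad * B * Fd * C * Ad) (-(Ad * B * Fd)) (-(Fd * C * Ad)) Fd *
        Matrix.fromBlocks A B C D := by
  have hC : C * Ad * A = C := mul_mul_eq_self_of_range_transpose_le hA.1 hCt
  have hB : Ad * B * Fd * (D - C * Ad * B) = Ad * B :=
    mul_mul_eq_self_of_range_transpose_le hF.1 hAB
  have hXM := fromBlocks_mul_fromBlocks_eq_of_schur_complement hC hB
  refine ⟨hXM, ?_⟩
  rw [hXM, fromBlocks_transpose, hA.2.2.2, hF.2.2.2, transpose_zero, transpose_zero]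
end

section
/- Suppose R(B) ⊆ R(A) and R(CA†) ⊆ R(F), where F = D - CA†B. Then with X = [[A† + A†BF†CA†, -A†BF†],[-F†CA†, F†]] and M = [[A,B],[C,D]], one has MX = [[AA†, 0],[0, FF†]]; in particular MX is symmetric. -/
open Matrix LinearMap

/-!
Since `R(B) ⊆ R(A)` and `R(CA†) ⊆ R(F)`, the projectors `AA†` and `FF†` fix `B` and `CA†`:
`AA†B = B` and `FF†CA† = CA†`. Multiplying the blocks out, these two identities make the
off-diagonal blocks of `MX` vanish and its diagonal blocks equal `AA†` and `FF†`, which are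
symmetric by the Penrose equations.
-/

namespace Matrix

variable {R : Type*} {k l m n o : Type*} [Fintype k] [Fintype l] [Fintype m] [Fintype o]

theorem mul_mul_eq_self_of_range_le [CommSemiring R] {A : Matrix l m R} {G : Matrix m l R}
    (hA : A * G * A = A) {X : Matrix l n R} [Fintype n]
    (hX : range X.mulVecLin ≤ range A.mulVecLin) : A * G * X = X := by
  refine ext_iff_mulVec.mpr fun v => ?_
  obtain ⟨w, hw : A *ᵥ w = X *ᵥ v⟩ := hX ⟨v, rfl⟩
  rw [← mulVec_mulVec, ← hw, mulVec_mulVec, hA]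

variable [Ring R]

theorem fromBlocks_mul_fromBlocks_eq_of_mul_schur_eq
    (A : Matrix k l R) (B : Matrix k o R) (C : Matrix m l R) (D : Matrix m o R)
    (Ad : Matrix l k R) (Fd : Matrix o m R)
    (hB : A * Ad * B = B) (hCA : (D - C * Ad * B) * Fd * (C * Ad) = C * Ad) :
    fromBlocks A B C D *
        fromBlocks (Ad + Ad * B * Fd * C * Ad) (-(Ad * B * Fd)) (-(Fd * C * Ad)) Fd
      = fromBlocks (A * Ad) 0 0 ((D - C * Ad * B) * Fd) := by
  rw [fromBlocks_multiply]
  congr 1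
  · simp only [Matrix.mul_add, Matrix.mul_neg, ← Matrix.mul_assoc, hB]
    abel
  · simp only [Matrix.mul_neg, ← Matrix.mul_assoc, hB]
    abel
  · calc C * (Ad + Ad * B * Fd * C * Ad) + D * -(Fd * C * Ad)
          = C * Ad - (D - C * Ad * B) * Fd * (C * Ad) := by
            simp only [Matrix.mul_add, Matrix.mul_neg, Matrix.sub_mul, ← Matrix.mul_assoc]
            abel
        _ = 0 := by rw [hCA, sub_self]
  · simp only [Matrix.mul_neg, ← Matrix.mul_assoc, Matrix.sub_mul]
    abel

end Matrix

theorem stmt14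
    {m n s p : ℕ}
    (A : Matrix (Fin m) (Fin n) ℝ) (B : Matrix (Fin m) (Fin p) ℝ)
    (C : Matrix (Fin s) (Fin n) ℝ) (D : Matrix (Fin s) (Fin p) ℝ)
    (Ad : Matrix (Fin n) (Fin m) ℝ) (hA : IsMoorePenrose A Ad)
    (Fd : Matrix (Fin p) (Fin s) ℝ) (hF : IsMoorePenrose (D - C * Ad * B) Fd)
    (hB : LinearMap.range (Matrix.mulVecLin (B)) ≤ LinearMap.range (Matrix.mulVecLin (A)))
    (hCA : LinearMap.range (Matrix.mulVecLin (C * Ad)) ≤ LinearMap.range (Matrix.mulVecLin (D - C * Ad * B))) :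
    Matrix.fromBlocks A B C D *
        Matrix.fromBlocks (Ad + Ad * B * Fd * C * Ad) (-(Ad * B * Fd)) (-(Fd * C * Ad)) Fd
      = Matrix.fromBlocks (A * Ad) 0 0 ((D - C * Ad * B) * Fd) ∧
    (Matrix.fromBlocks A B C D *
        Matrix.fromBlocks (Ad + Ad * B * Fd * C * Ad) (-(Ad * B * Fd)) (-(Fd * C * Ad)) Fd)ᵀ
      = Matrix.fromBlocks A B C D *
        Matrix.fromBlocks (Ad + Ad * B * Fd * C * Ad) (-(Ad * B * Fd)) (-(Fd * C * Ad)) Fd := by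
  have hMX := fromBlocks_mul_fromBlocks_eq_of_mul_schur_eq A B C D Ad Fd
    (mul_mul_eq_self_of_range_le hA.1 hB) (mul_mul_eq_self_of_range_le hF.1 hCA)
  refine ⟨hMX, ?_⟩
  rw [hMX]
  exact IsSymm.fromBlocks hA.2.2.1 transpose_zero hF.2.2.1
end

section
/- Suppose R(Cᵀ) ⊆ R(Aᵀ) and R((A†B)ᵀ) ⊆ R(Fᵀ), where F = D - CA†B. Then XMX = X, where X = [[A† + A†BF†CA†, -A†BF†],[-F†CA†, F†]] and M = [[A,B],[C,D]]. -/
/-!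
Write `F = D - C A† B`. A row-space inclusion `R(Cᵀ) ⊆ R(Aᵀ)` means `C = Z A` for some `Z`, so
`C G A = C` for every inner inverse `G` of `A`; the two range hypotheses therefore give
`C A† A = C` and `A† B F† F = A† B`. With these, `X M` collapses to the block diagonal
`diag(A† A, F† F)`, and `X M X = diag(A† A, F† F) X = X` because `A† A A† = A†` and `F† F F† = F†`.
-/

open Matrix LinearMap

namespace Matrix

variable {R k l m n p : Type*}

theorem exists_mul_eq_of_range_mulVecLin_le_s16 [CommSemiring R] [Fintype m] [Fintype n]
    [DecidableEq n] {M : Matrix l m R} {N : Matrix l n R}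
    (h : range N.mulVecLin ≤ range M.mulVecLin) :
    ∃ Z : Matrix m n R, M * Z = N := by
  choose v hv using fun j ↦ h ⟨Pi.single j 1, N.mulVec_single_one j⟩
  exact ⟨(of v)ᵀ, ext fun i j ↦ congrFun (hv j) i⟩

theorem mul_mul_eq_of_range_transpose_le_s16 [CommRing R] [Fintype k] [Fintype l] [Fintype m]
    {A : Matrix l m R} {G : Matrix m l R} {C : Matrix k m R} (hA : A * G * A = A)
    (h : range Cᵀ.mulVecLin ≤ range Aᵀ.mulVecLin) : C * G * A = C := by
  classical
  obtain ⟨Z, hZ⟩ := exists_mul_eq_of_range_mulVecLin_le_s16 h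
  have hC : C = Zᵀ * A := by rw [← transpose_transpose C, ← hZ, transpose_mul, transpose_transpose]
  rw [hC, Matrix.mul_assoc, Matrix.mul_assoc, ← Matrix.mul_assoc A, hA]

/-- The Banachiewicz–Schur form of `fromBlocks A B C D`, built from generalized inverses `Ad` of `A`
and `Fd` of the Schur complement `D - C * Ad * B`. -/
def banachiewiczSchur [Ring R] [Fintype m] [Fintype n] [Fintype k] [Fintype p]
    (B : Matrix m p R) (C : Matrix k n R) (Ad : Matrix n m R) (Fd : Matrix p k R) :
    Matrix (n ⊕ p) (m ⊕ k) R :=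
  fromBlocks (Ad + Ad * B * Fd * C * Ad) (-(Ad * B * Fd)) (-(Fd * C * Ad)) Fd

section Blocks

variable [Ring R] [Fintype m] [Fintype n] [Fintype k] [Fintype p]
  {A : Matrix m n R} {B : Matrix m p R} {C : Matrix k n R} {D : Matrix k p R}
  {Ad : Matrix n m R} {Fd : Matrix p k R}

theorem banachiewiczSchur_mul_fromBlocks (hC : C * Ad * A = C)
    (hB : Ad * B * Fd * (D - C * Ad * B) = Ad * B) :
    banachiewiczSchur B C Ad Fd * fromBlocks A B C D =
      fromBlocks (Ad * A) 0 0 (Fd * (D - C * Ad * B)) := by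
  generalize hF : D - C * Ad * B = F at hB
  obtain rfl : D = F + C * Ad * B := by rw [← hF, sub_add_cancel]
  simp only [Matrix.mul_assoc] at hC hB
  rw [banachiewiczSchur, fromBlocks_multiply]
  congr 1 <;> simp only [Matrix.mul_assoc, Matrix.add_mul, Matrix.mul_add, Matrix.neg_mul,
    hC, hB] <;> abel

theorem fromBlocks_mul_banachiewiczSchur {F : Matrix k p R} (hAd : Ad * A * Ad = Ad)
    (hFd : Fd * F * Fd = Fd) :
    fromBlocks (Ad * A) 0 0 (Fd * F) * banachiewiczSchur B C Ad Fd =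
      banachiewiczSchur B C Ad Fd := by
  rw [banachiewiczSchur, fromBlocks_multiply]
  congr 1 <;> simp only [Matrix.mul_add, Matrix.mul_neg, Matrix.zero_mul, neg_zero, add_zero,
    zero_add, ← Matrix.mul_assoc, hAd, hFd]

end Blocks

end Matrix

theorem stmt16
    {m n s p : ℕ}
    (A : Matrix (Fin m) (Fin n) ℝ) (B : Matrix (Fin m) (Fin p) ℝ)
    (C : Matrix (Fin s) (Fin n) ℝ) (D : Matrix (Fin s) (Fin p) ℝ)
    (Ad : Matrix (Fin n) (Fin m) ℝ) (hA : IsMoorePenrose A Ad)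
    (Fd : Matrix (Fin p) (Fin s) ℝ) (hF : IsMoorePenrose (D - C * Ad * B) Fd)
    (hCt : LinearMap.range (Matrix.mulVecLin (Cᵀ)) ≤ LinearMap.range (Matrix.mulVecLin (Aᵀ)))
    (hAB : LinearMap.range (Matrix.mulVecLin ((Ad * B)ᵀ)) ≤ LinearMap.range (Matrix.mulVecLin ((D - C * Ad * B)ᵀ))) :
    Matrix.fromBlocks (Ad + Ad * B * Fd * C * Ad) (-(Ad * B * Fd)) (-(Fd * C * Ad)) Fd *
      Matrix.fromBlocks A B C D *
      Matrix.fromBlocks (Ad + Ad * B * Fd * C * Ad) (-(Ad * B * Fd)) (-(Fd * C * Ad)) Fd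
    = Matrix.fromBlocks (Ad + Ad * B * Fd * C * Ad) (-(Ad * B * Fd)) (-(Fd * C * Ad)) Fd := by
  have hC := mul_mul_eq_of_range_transpose_le_s16 hA.1 hCt
  have hB := mul_mul_eq_of_range_transpose_le_s16 hF.1 hAB
  change banachiewiczSchur B C Ad Fd * _ * banachiewiczSchur B C Ad Fd = banachiewiczSchur B C Ad Fd
  rw [banachiewiczSchur_mul_fromBlocks hC hB,
    fromBlocks_mul_banachiewiczSchur hA.2.1 hF.2.1]
end

section
/- If R(Bᵀ) ⊆ R(Dᵀ) and R(C) ⊆ R(D), then the complementary generalized Schur complement A - BYC is the same for every {1}-inverse Y of D (i.e., every Y with DYD = D); in particular A - BYC = A - BD†C for all such Y. -/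
/-! The range inclusions factor `B = U * D` and `C = D * W`, so for any `{1}`-inverse `Y` of `D`
we get `B * Y * C = U * (D * Y * D) * W = U * D * W`, which does not depend on `Y`. -/

open Matrix LinearMap

theorem Matrix.exists_mul_eq_of_range_mulVecLin_le_s18 {R l m n : Type*} [CommSemiring R]
    [Fintype m] [Fintype n] (M : Matrix l m R) (N : Matrix l n R)
    (h : range M.mulVecLin ≤ range N.mulVecLin) :
    ∃ X : Matrix n m R, N * X = M := by
  classical
  choose x hx using fun j => h ⟨Pi.single j 1, mulVec_single_one M j⟩
  exact ⟨(of x)ᵀ, ext fun i j => congrFun (hx j) i⟩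

theorem Matrix.mul_mul_eq_mul_mul_of_range_mulVecLin_le {R k l m n : Type*} [CommSemiring R]
    [Fintype k] [Fintype l] [Fintype m] [Fintype n]
    {B : Matrix k m R} {C : Matrix l n R} {D : Matrix l m R} {Y Z : Matrix m l R}
    (hB : range Bᵀ.mulVecLin ≤ range Dᵀ.mulVecLin) (hC : range C.mulVecLin ≤ range D.mulVecLin)
    (hY : D * Y * D = D) (hZ : D * Z * D = D) :
    B * Y * C = B * Z * C := by
  obtain ⟨U, hU⟩ := exists_mul_eq_of_range_mulVecLin_le_s18 Bᵀ Dᵀ hB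
  obtain ⟨W, rfl⟩ := exists_mul_eq_of_range_mulVecLin_le_s18 C D hC
  obtain rfl : Uᵀ * D = B := by simpa using congrArg transpose hU
  have key (X : Matrix m l R) (hX : D * X * D = D) : Uᵀ * D * X * (D * W) = Uᵀ * D * W := by
    rw [← Matrix.mul_assoc, Matrix.mul_assoc Uᵀ D X, Matrix.mul_assoc Uᵀ (D * X) D, hX]
  rw [key Y hY, key Z hZ]

theorem stmt18
    {m n s p : ℕ}
    (A : Matrix (Fin m) (Fin n) ℝ) (B : Matrix (Fin m) (Fin p) ℝ)
    (C : Matrix (Fin s) (Fin n) ℝ) (D : Matrix (Fin s) (Fin p) ℝ)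
    (Dd : Matrix (Fin p) (Fin s) ℝ) (hD : IsMoorePenrose D Dd)
    (hBt : LinearMap.range (Matrix.mulVecLin (Bᵀ)) ≤ LinearMap.range (Matrix.mulVecLin (Dᵀ)))
    (hC : LinearMap.range (Matrix.mulVecLin (C)) ≤ LinearMap.range (Matrix.mulVecLin (D))) :
    ∀ Y : Matrix (Fin p) (Fin s) ℝ, D * Y * D = D → A - B * Y * C = A - B * Dd * C := by
  intro Y hY
  rw [mul_mul_eq_mul_mul_of_range_mulVecLin_le hBt hC hY hD.1]
end

section
/- There exist A, B, C, D with R(B) ⊆ R(A) and R(Cᵀ) ⊆ R(Aᵀ) such that H† ≠ J, where H = [[A†, -A†B],[CA†, D - CA†B]] and J = [[A - BD†C, BD†],[-D†C, D†]]. Concretely, this holds for A = [[1,-1],[2,-2]], B = [1;2], C = [-1,1], D = [0]. -/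
/-!
With `D = 0` we have `D† = 0`, so the complementary transform is `J = [[A, 0], [0, 0]]` and
`J * H = [[A A†, -A A† B], [0, 0]]`. If `J` were the Moore-Penrose inverse of `H`, this product
would be symmetric, forcing `A A† B = 0`; but `R(B) ⊆ R(A)` gives `A A† B = B`, so `B = 0`.
The example has `B ≠ 0`.
-/

open Matrix LinearMap

namespace Matrix

variable {m n p q : Type*} [Fintype n] [Fintype p]

theorem range_mulVecLin_le_of_eq_mul {A : Matrix m n ℝ} {B : Matrix m p ℝ} {E : Matrix n p ℝ}
    (h : B = A * E) : range B.mulVecLin ≤ range A.mulVecLin := by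
  rw [h, mulVecLin_mul]
  exact range_comp_le_range _ _

theorem mul_mul_eq_of_range_le_s19 [Fintype m] {A : Matrix m n ℝ} {X : Matrix n m ℝ}
    {B : Matrix m p ℝ} (hA : A * X * A = A) (hB : range B.mulVecLin ≤ range A.mulVecLin) :
    A * X * B = B := by
  refine ext_iff_mulVec.mpr fun v => ?_
  obtain ⟨w, hw⟩ := hB ⟨v, rfl⟩
  simp only [mulVecLin_apply] at hw
  rw [← mulVec_mulVec, ← hw, mulVec_mulVec, hA]

theorem eq_zero_of_fromBlocks_transpose_eq_self {P : Matrix m m ℝ} {Q : Matrix m q ℝ}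
    (h : (fromBlocks P Q 0 (0 : Matrix q q ℝ))ᵀ = fromBlocks P Q 0 0) : Q = 0 :=
  ((fromBlocks_inj.mp (by simpa only [fromBlocks_transpose, transpose_zero] using h)).2.1).symm

end Matrix

section PivotTransform

variable {m n p q : Type*} [Fintype m] [Fintype n] [Fintype p] [Fintype q]
  [DecidableEq m] [DecidableEq n] [DecidableEq p] [DecidableEq q]

theorem IsMoorePenrose.eq_zero_of_zero {X : Matrix n m ℝ}
    (h : IsMoorePenrose (0 : Matrix m n ℝ) X) : X = 0 := by
  simpa using h.2.1.symm

/-- The pseudo principal pivot transform `H` of `[[A, B], [C, D]]` relative to `A`,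
where `Ad` plays the role of `A†`. -/
def pseudoPivot (Ad : Matrix n m ℝ) (B : Matrix m p ℝ) (C : Matrix q n ℝ)
    (D : Matrix q p ℝ) : Matrix (n ⊕ q) (m ⊕ p) ℝ :=
  fromBlocks Ad (-(Ad * B)) (C * Ad) (D - C * Ad * B)

/-- The complementary pseudo principal pivot transform `J` of `[[A, B], [C, D]]` relative to `D`,
where `Dd` plays the role of `D†`. -/
def complementaryPivot (A : Matrix m n ℝ) (B : Matrix m p ℝ) (C : Matrix q n ℝ)
    (Dd : Matrix p q ℝ) : Matrix (m ⊕ p) (n ⊕ q) ℝ :=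
  fromBlocks (A - B * Dd * C) (B * Dd) (-(Dd * C)) Dd

theorem not_isMoorePenrose_pseudoPivot_complementaryPivot {A : Matrix m n ℝ} {Ad : Matrix n m ℝ}
    {B : Matrix m p ℝ} {C : Matrix q n ℝ} {Dd : Matrix p q ℝ}
    (hB : range B.mulVecLin ≤ range A.mulVecLin) (hB0 : B ≠ 0)
    (hA : A * Ad * A = A) (hD : IsMoorePenrose (0 : Matrix q p ℝ) Dd) :
    ¬ IsMoorePenrose (pseudoPivot Ad B C 0) (complementaryPivot A B C Dd) := by
  intro hH
  obtain rfl := hD.eq_zero_of_zero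
  have hsymm := hH.2.2.2
  simp only [pseudoPivot, complementaryPivot, Matrix.mul_zero, Matrix.zero_mul, sub_zero,
    neg_zero, fromBlocks_multiply, Matrix.mul_neg, add_zero, ← Matrix.mul_assoc] at hsymm
  have hAAdB := eq_zero_of_fromBlocks_transpose_eq_self hsymm
  rw [mul_mul_eq_of_range_le_s19 hA hB, neg_eq_zero] at hAAdB
  exact hB0 hAAdB

end PivotTransform

theorem stmt19 :
    ∃ (A : Matrix (Fin 2) (Fin 2) ℝ) (B : Matrix (Fin 2) (Fin 1) ℝ)
      (C : Matrix (Fin 1) (Fin 2) ℝ) (D : Matrix (Fin 1) (Fin 1) ℝ),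
      A = !![1, -1; 2, -2] ∧ B = !![1; 2] ∧ C = !![-1, 1] ∧ D = !![0] ∧
      LinearMap.range (Matrix.mulVecLin (B)) ≤ LinearMap.range (Matrix.mulVecLin (A)) ∧
      LinearMap.range (Matrix.mulVecLin (Cᵀ)) ≤ LinearMap.range (Matrix.mulVecLin (Aᵀ)) ∧
      ∀ (Ad : Matrix (Fin 2) (Fin 2) ℝ) (Dd : Matrix (Fin 1) (Fin 1) ℝ)
        (Hd : Matrix (Fin 2 ⊕ Fin 1) (Fin 2 ⊕ Fin 1) ℝ),
        IsMoorePenrose A Ad → IsMoorePenrose D Dd →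
        IsMoorePenrose (Matrix.fromBlocks Ad (-(Ad * B)) (C * Ad) (D - C * Ad * B)) Hd →
        Hd ≠ Matrix.fromBlocks (A - B * Dd * C) (B * Dd) (-(Dd * C)) Dd := by
  have hB : range (!![1; 2] : Matrix (Fin 2) (Fin 1) ℝ).mulVecLin ≤
      range (!![1, -1; 2, -2] : Matrix (Fin 2) (Fin 2) ℝ).mulVecLin :=
    range_mulVecLin_le_of_eq_mul (E := !![1; 0]) <| by
      ext i j; fin_cases i <;> fin_cases j <;> simp [mul_apply, Fin.sum_univ_two]
  have hC : range (!![-1, 1] : Matrix (Fin 1) (Fin 2) ℝ)ᵀ.mulVecLin ≤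
      range (!![1, -1; 2, -2] : Matrix (Fin 2) (Fin 2) ℝ)ᵀ.mulVecLin :=
    range_mulVecLin_le_of_eq_mul (E := !![-1; 0]) <| by
      ext i j; fin_cases i <;> fin_cases j <;> simp [mul_apply, Fin.sum_univ_two]
  have hB0 : (!![1; 2] : Matrix (Fin 2) (Fin 1) ℝ) ≠ 0 := fun h => by
    simpa using congrFun (congrFun h 0) 0
  have hD0 : (!![0] : Matrix (Fin 1) (Fin 1) ℝ) = 0 := by
    ext i j; fin_cases i; fin_cases j; rfl
  refine ⟨_, _, _, _, rfl, rfl, rfl, rfl, hB, hC, ?_⟩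
  rw [hD0]
  rintro Ad Dd Hd hA hDd hH rfl
  exact not_isMoorePenrose_pseudoPivot_complementaryPivot hB hB0 hA.1 hDd hH
end
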